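/- arXiv:cs/0506020 — 2 statements merged into one kernel-verified Lean document; each statement's English description precedes it below -/
import Mathlib

section
/- Fix an integer L ≥ 1 and let F(x) = 1 − e^{−Lx} Σ_{k=0}^{L−1} (Lx)^k / k! for x ≥ 0. Then the expected minimum of N i.i.d. random variables with distribution F satisfies ∫_0^∞ (1−F(x))^N dx = Θ(N^{−1/L}): there exist constants 0 < c₁ ≤ c₂ and N₀ such that c₁ N^{−1/L} ≤ ∫_0^∞ (1−F(x))^N dx ≤ c₂ N^{−1/L} for all N ≥ N₀. -/
/-!
With `t = L x` the integrand is the Erlang survival function `e^{-t} ∑_{k<L} t^k/k!`, i.e. the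
probability that a Poisson variable of mean `t` is below `L`. Near `0` it is `1 - Θ(x^L)`: at
least `1 - 2 (Lx)^L / L!` for `Lx ≤ 1`, and at most `exp (-c x^L)` on `(0, 4]` because the Poisson
mass at `L` is already at least `c x^L` there. Beyond `4` it is at most `1/2` and decays
exponentially.

Lower bound: on `(0, b]` with `b = (2aN)^{-1/L}` and `a = 2 L^L / L!`, Bernoulli's inequality
keeps the `N`-th power above `1/2`, so the integral is at least `b/2`. Upper bound: the `N`-th power is at most
`exp (-cN x^L)`, whose integral is `(cN)^{-1/L} Γ(1/L + 1)`, plus `2^{1-N}` times the integrand on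
the tail, and `2^{1-N} ≤ 2/N ≤ 2 N^{-1/L}`.
-/

open Real Set Finset
open MeasureTheory
open scoped Nat

noncomputable def erlangSurvival (n : ℕ) (t : ℝ) : ℝ :=
  exp (-t) * ∑ k ∈ range n, t ^ k / k !

section ErlangSurvival

variable {n : ℕ} {t x : ℝ}

theorem continuous_erlangSurvival (n : ℕ) : Continuous (erlangSurvival n) := by
  unfold erlangSurvival
  fun_prop

theorem erlangSurvival_nonneg (ht : 0 ≤ t) : 0 ≤ erlangSurvival n t := by
  unfold erlangSurvival
  positivity

theorem one_sub_two_mul_pow_div_factorial_le_erlangSurvival (hn : 0 < n) (ht₀ : 0 ≤ t)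
    (ht₁ : t ≤ 1) : 1 - 2 * t ^ n / n ! ≤ erlangSurvival n t := by
  have hrem : t ^ n * (n + 1) / (n ! * n) ≤ 2 * t ^ n / n ! := by
    have hn₁ : (1 : ℝ) ≤ n := by exact_mod_cast hn
    rw [div_le_div_iff₀ (by positivity) (by positivity)]
    have : 0 ≤ t ^ n * n ! := by positivity
    nlinarith
  have hsum := exp_bound' ht₀ ht₁ hn
  have hexp : exp (-t) ≤ 1 := exp_le_one_iff.mpr (by linarith)
  have hterm : 0 ≤ 2 * t ^ n / n ! := by positivity
  calc 1 - 2 * t ^ n / n ! ≤ exp (-t) * (exp t - 2 * t ^ n / n !) := by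
        rw [mul_sub, ← exp_add, neg_add_cancel, exp_zero]
        nlinarith
    _ ≤ erlangSurvival n t := mul_le_mul_of_nonneg_left (by linarith) (exp_pos _).le

theorem erlangSurvival_le_exp_neg (ht : 0 ≤ t) :
    erlangSurvival n t ≤ exp (-(exp (-t) * t ^ n / n !)) := by
  have hsum : ∑ k ∈ range n, t ^ k / k ! + t ^ n / n ! ≤ exp t := by
    simpa [sum_range_succ] using sum_le_exp_of_nonneg ht (n + 1)
  calc erlangSurvival n t ≤ exp (-t) * (exp t - t ^ n / n !) :=
        mul_le_mul_of_nonneg_left (by linarith) (exp_pos _).le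
    _ = 1 - exp (-t) * t ^ n / n ! := by
        rw [mul_sub, ← exp_add, neg_add_cancel, exp_zero, mul_div_assoc]
    _ ≤ exp (-(exp (-t) * t ^ n / n !)) := by
        linarith [add_one_le_exp (-(exp (-t) * t ^ n / n !))]

theorem erlangSurvival_le_two_pow_mul_exp (ht : 0 ≤ t) :
    erlangSurvival n t ≤ 2 ^ n * exp (-(t / 2)) := by
  have hsum : ∑ k ∈ range n, t ^ k / k ! ≤ 2 ^ n * exp (t / 2) :=
    calc ∑ k ∈ range n, t ^ k / k ! = ∑ k ∈ range n, 2 ^ k * ((t / 2) ^ k / k !) := by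
          refine sum_congr rfl fun k _ => ?_
          rw [div_pow]
          field_simp
      _ ≤ ∑ k ∈ range n, 2 ^ n * ((t / 2) ^ k / k !) := by
          gcongr with k hk
          · exact one_le_two
          · exact (mem_range.1 hk).le
      _ ≤ 2 ^ n * exp (t / 2) := by
          rw [← mul_sum]
          gcongr
          exact sum_le_exp_of_nonneg (by positivity) n
  calc erlangSurvival n t ≤ exp (-t) * (2 ^ n * exp (t / 2)) :=
        mul_le_mul_of_nonneg_left hsum (exp_pos _).le
    _ = 2 ^ n * exp (-(t / 2)) := by
        rw [mul_left_comm, ← exp_add]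
        ring_nf

theorem erlangSurvival_le_half (hn : 0 < n) (ht : 4 * n ≤ t) : erlangSurvival n t ≤ 1 / 2 := by
  have he : 2 * exp (-2) ≤ 1 / 2 := by
    have := quadratic_le_exp_of_nonneg (x := 2) (by norm_num)
    rw [exp_neg]
    field_simp
    linarith
  calc erlangSurvival n t ≤ 2 ^ n * exp (-(t / 2)) :=
        erlangSurvival_le_two_pow_mul_exp ((by positivity : (0 : ℝ) ≤ 4 * n).trans ht)
    _ ≤ 2 ^ n * exp (n * -2) := by gcongr; linarith
    _ = (2 * exp (-2)) ^ n := by rw [exp_nat_mul, mul_pow]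
    _ ≤ 2 * exp (-2) := pow_le_of_le_one (by positivity) (he.trans (by norm_num)) hn.ne'
    _ ≤ 1 / 2 := he

theorem integrableOn_erlangSurvival_mul_pow (n : ℕ) {r : ℝ} (hr : 0 < r) {N : ℕ} (hN : 0 < N) :
    IntegrableOn (fun x => erlangSurvival n (r * x) ^ N) (Ioi (0 : ℝ)) := by
  have hbound : IntegrableOn (fun x => (2 ^ n) ^ N * exp (-(N * (r / 2)) * x)) (Ioi (0 : ℝ)) :=
    (exp_neg_integrableOn_Ioi 0 (by positivity)).const_mul _
  refine hbound.mono'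
    (((continuous_erlangSurvival n).comp (continuous_const_mul r)).pow N).aestronglyMeasurable ?_
  refine ae_restrict_of_forall_mem measurableSet_Ioi fun x hx => ?_
  have hrx : 0 ≤ r * x := mul_nonneg hr.le (le_of_lt hx)
  rw [norm_of_nonneg (pow_nonneg (erlangSurvival_nonneg hrx) N)]
  calc erlangSurvival n (r * x) ^ N ≤ (2 ^ n * exp (-(r * x / 2))) ^ N :=
        pow_le_pow_left₀ (erlangSurvival_nonneg hrx) (erlangSurvival_le_two_pow_mul_exp hrx) N
    _ = (2 ^ n) ^ N * exp (-(N * (r / 2)) * x) := by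
        rw [mul_pow, ← exp_nat_mul]
        ring_nf

theorem one_sub_mul_rpow_le_erlangSurvival_mul (hn : 0 < n) (hx : x ∈ Ioc (0 : ℝ) (1 / n)) :
    1 - 2 * n ^ n / n ! * x ^ (n : ℝ) ≤ erlangSurvival n (n * x) := by
  have hn' : (0 : ℝ) < n := by exact_mod_cast hn
  convert one_sub_two_mul_pow_div_factorial_le_erlangSurvival hn
    (mul_nonneg hn'.le hx.1.le) ((le_div_iff₀' hn').mp hx.2) using 2
  rw [rpow_natCast, mul_pow]
  ring

theorem erlangSurvival_mul_le_exp_neg_mul_rpow (hx : x ∈ Ioc (0 : ℝ) 4) :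
    erlangSurvival n (n * x) ≤ exp (-(exp (-(4 * n)) * n ^ n / n !) * x ^ (n : ℝ)) := by
  have hx₀ : 0 ≤ x := hx.1.le
  have hexp : exp (-(4 * n)) ≤ exp (-(n * x)) :=
    exp_le_exp.mpr <| neg_le_neg <| by nlinarith [hx.2, (Nat.cast_nonneg n : (0 : ℝ) ≤ n)]
  refine (erlangSurvival_le_exp_neg (by positivity)).trans (exp_le_exp.mpr ?_)
  rw [rpow_natCast, neg_mul, neg_le_neg_iff]
  calc exp (-(4 * n)) * n ^ n / n ! * x ^ n = exp (-(4 * n)) * ((n * x) ^ n / n !) := by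
        rw [mul_pow]
        ring
    _ ≤ exp (-(n * x)) * ((n * x) ^ n / n !) := by gcongr
    _ = exp (-(n * x)) * (n * x) ^ n / n ! := by ring

end ErlangSurvival

theorem half_le_pow_of_one_sub_le {u y : ℝ} {N : ℕ} (hu : 1 - y ≤ u) (hy : 2 * N * y ≤ 1) :
    1 / 2 ≤ u ^ N := by
  rcases N with _ | N
  · norm_num
  have hy' : (N + 1) * y ≤ 1 / 2 := by push_cast at hy; linarith
  have hy'' : y ≤ 1 / 2 := by nlinarith
  calc 1 / 2 ≤ 1 + ((N + 1 : ℕ) : ℝ) * -y := by push_cast; linarith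
    _ ≤ (1 + -y) ^ (N + 1) := one_add_mul_le_pow (by linarith) _
    _ ≤ u ^ (N + 1) := pow_le_pow_left₀ (by linarith) (by linarith) _

theorem half_pow_pred_le_two_mul_rpow {p : ℝ} {N : ℕ} (hp : 1 ≤ p) (hN : 1 ≤ N) :
    (1 / 2 : ℝ) ^ (N - 1) ≤ 2 * (N : ℝ) ^ (-1 / p) := by
  calc (1 / 2 : ℝ) ^ (N - 1) = 2 * (2 ^ N)⁻¹ := by
        rw [one_div, inv_pow, ← pow_sub_one_mul (by omega : N ≠ 0) (2 : ℝ)]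
        field_simp
    _ ≤ 2 * (N : ℝ) ^ (-1 : ℝ) := by
        rw [rpow_neg_one]
        gcongr
        exact_mod_cast (Nat.lt_two_pow_self).le
    _ ≤ 2 * (N : ℝ) ^ (-1 / p) := by
        gcongr
        · exact_mod_cast hN
        · rw [le_div_iff₀ (by linarith)]
          linarith

theorem mul_rpow_le_integral_pow {f : ℝ → ℝ} {a p δ : ℝ} {N : ℕ} (ha : 0 < a) (hp : 0 < p)
    (hδ : 0 < δ) (hf₀ : ∀ x ∈ Ioi (0 : ℝ), 0 ≤ f x)
    (hint : IntegrableOn (fun x => f x ^ N) (Ioi (0 : ℝ)))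
    (hf : ∀ x ∈ Ioc (0 : ℝ) δ, 1 - a * x ^ p ≤ f x) (hN : (2 * a * δ ^ p)⁻¹ ≤ N) :
    (2 * a) ^ (-1 / p) / 2 * (N : ℝ) ^ (-1 / p) ≤ ∫ x in Ioi (0 : ℝ), f x ^ N := by
  have hN₀ : (0 : ℝ) < N := lt_of_lt_of_le (by positivity) hN
  set b := (2 * a * N) ^ (-1 / p) with hb
  have hb₀ : 0 < b := by positivity
  have hbp : b ^ p = (2 * a * N)⁻¹ := by
    rw [hb, ← rpow_mul (by positivity), div_mul_cancel₀ _ hp.ne', rpow_neg_one]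
  have hbδ : b ≤ δ := by
    rw [← rpow_le_rpow_iff hb₀.le hδ.le hp, hbp, inv_le_comm₀ (by positivity) (by positivity)]
    rw [inv_le_iff_one_le_mul₀ (by positivity)] at hN
    rw [inv_le_iff_one_le_mul₀ (by positivity)]
    nlinarith
  have hhalf : ∀ x ∈ Ioc (0 : ℝ) b, 1 / 2 ≤ f x ^ N := by
    intro x hx
    refine half_le_pow_of_one_sub_le (y := a * b ^ p) ?_ ?_
    · refine le_trans ?_ (hf x ⟨hx.1, hx.2.trans hbδ⟩)
      gcongr
      exacts [hx.1.le, hx.2]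
    · exact le_of_eq (by rw [hbp]; field_simp)
  calc (2 * a) ^ (-1 / p) / 2 * (N : ℝ) ^ (-1 / p) = ∫ _ in Ioc (0 : ℝ) b, (1 / 2 : ℝ) := by
        rw [setIntegral_const, Real.volume_real_Ioc_of_le hb₀.le, hb,
          mul_rpow (by positivity) hN₀.le, smul_eq_mul]
        ring
    _ ≤ ∫ x in Ioc (0 : ℝ) b, f x ^ N :=
        setIntegral_mono_on (integrableOn_const (by simp)) (hint.mono_set Ioc_subset_Ioi_self)
          measurableSet_Ioc hhalf
    _ ≤ ∫ x in Ioi (0 : ℝ), f x ^ N :=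
        setIntegral_mono_set hint
          (ae_restrict_of_forall_mem measurableSet_Ioi fun x hx => pow_nonneg (hf₀ x hx) N)
          Ioc_subset_Ioi_self.eventuallyLE

theorem integral_pow_le_mul_rpow {f : ℝ → ℝ} {c p x₀ : ℝ} {N : ℕ} (hc : 0 < c) (hp : 1 ≤ p)
    (hN : 1 ≤ N) (hf₀ : ∀ x ∈ Ioi (0 : ℝ), 0 ≤ f x) (hint : IntegrableOn f (Ioi (0 : ℝ)))
    (hmid : ∀ x ∈ Ioc (0 : ℝ) x₀, f x ≤ exp (-c * x ^ p)) (htail : ∀ x ∈ Ioi x₀, f x ≤ 1 / 2) :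
    ∫ x in Ioi (0 : ℝ), f x ^ N ≤
      (c ^ (-1 / p) * Gamma (1 / p + 1) + 2 * ∫ x in Ioi (0 : ℝ), f x) * (N : ℝ) ^ (-1 / p) := by
  have hp₀ : 0 < p := by linarith
  have hN₀ : (0 : ℝ) < N := by exact_mod_cast hN
  have hpt : ∀ x ∈ Ioi (0 : ℝ), f x ^ N ≤ exp (-(c * N) * x ^ p) + (1 / 2) ^ (N - 1) * f x := by
    intro x hx
    rcases le_or_gt x x₀ with hx₀ | hx₀
    · calc f x ^ N ≤ exp (-c * x ^ p) ^ N := pow_le_pow_left₀ (hf₀ x hx) (hmid x ⟨hx, hx₀⟩) N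
        _ = exp (-(c * N) * x ^ p) := by
            rw [← exp_nat_mul]
            ring_nf
        _ ≤ _ := le_add_of_nonneg_right (mul_nonneg (by positivity) (hf₀ x hx))
    · calc f x ^ N = f x ^ (N - 1) * f x := by rw [← pow_succ, Nat.sub_add_cancel hN]
        _ ≤ (1 / 2) ^ (N - 1) * f x :=
            mul_le_mul_of_nonneg_right (pow_le_pow_left₀ (hf₀ x hx) (htail x hx₀) _) (hf₀ x hx)
        _ ≤ _ := le_add_of_nonneg_left (exp_pos _).le
  have hexp : IntegrableOn (fun x => exp (-(c * N) * x ^ p)) (Ioi (0 : ℝ)) := by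
    simpa using integrableOn_rpow_mul_exp_neg_mul_rpow (s := 0) (by norm_num) hp₀
      (by positivity : 0 < c * N)
  have hintegral_nonneg : 0 ≤ ∫ x in Ioi (0 : ℝ), f x := setIntegral_nonneg measurableSet_Ioi hf₀
  calc ∫ x in Ioi (0 : ℝ), f x ^ N
        ≤ ∫ x in Ioi (0 : ℝ), (exp (-(c * N) * x ^ p) + (1 / 2) ^ (N - 1) * f x) :=
        integral_mono_of_nonneg
          (ae_restrict_of_forall_mem measurableSet_Ioi fun x hx => pow_nonneg (hf₀ x hx) N)
          (hexp.add (hint.const_mul _)) (ae_restrict_of_forall_mem measurableSet_Ioi hpt)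
    _ = (c * N) ^ (-1 / p) * Gamma (1 / p + 1) + (1 / 2) ^ (N - 1) * ∫ x in Ioi (0 : ℝ), f x := by
        rw [integral_add hexp (hint.const_mul _), integral_const_mul,
          integral_exp_neg_mul_rpow hp₀ (by positivity)]
    _ ≤ c ^ (-1 / p) * N ^ (-1 / p) * Gamma (1 / p + 1) +
          2 * N ^ (-1 / p) * ∫ x in Ioi (0 : ℝ), f x := by
        rw [mul_rpow hc.le hN₀.le]
        gcongr
        exact half_pow_pred_le_two_mul_rpow hp hN
    _ = _ := by ring

/-- Fix `L ≥ 1` and let `F(x) = 1 − e^{−Lx} Σ_{k<L} (Lx)^k/k!`. Then the expected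
minimum of `N` i.i.d. variables with cdf `F`, `∫_0^∞ (1−F(x))^N dx`, is `Θ(N^{−1/L})`. -/
theorem chi_square_min_expectation_theta (L : ℕ) (hL : 1 ≤ L) :
    ∃ c₁ c₂ : ℝ, ∃ N₀ : ℕ, 0 < c₁ ∧ c₁ ≤ c₂ ∧
      ∀ N : ℕ, N₀ ≤ N →
        c₁ * (N : ℝ) ^ (-(1 : ℝ) / L) ≤
            (∫ x in Ioi (0 : ℝ),
              (Real.exp (-(L : ℝ) * x) *
                ∑ k ∈ Finset.range L, ((L : ℝ) * x) ^ k / (Nat.factorial k : ℝ)) ^ N) ∧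
          (∫ x in Ioi (0 : ℝ),
              (Real.exp (-(L : ℝ) * x) *
                ∑ k ∈ Finset.range L, ((L : ℝ) * x) ^ k / (Nat.factorial k : ℝ)) ^ N) ≤
            c₂ * (N : ℝ) ^ (-(1 : ℝ) / L) := by
  have hF : ∀ x : ℝ, exp (-(L : ℝ) * x) * ∑ k ∈ range L, ((L : ℝ) * x) ^ k / (k ! : ℝ) =
      erlangSurvival L (L * x) := fun x => by rw [erlangSurvival, neg_mul]
  simp only [hF]
  have hL₀ : (0 : ℝ) < L := by exact_mod_cast hL
  have hF₀ : ∀ x ∈ Ioi (0 : ℝ), 0 ≤ erlangSurvival L (L * x) :=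
    fun x hx => erlangSurvival_nonneg (mul_nonneg hL₀.le (le_of_lt hx))
  set a : ℝ := 2 * L ^ L / (L ! : ℝ) with ha
  set c : ℝ := exp (-(4 * L)) * L ^ L / (L ! : ℝ)
  set C := c ^ (-1 / (L : ℝ)) * Gamma (1 / L + 1) + 2 * ∫ x in Ioi (0 : ℝ), erlangSurvival L (L * x)
  refine ⟨(2 * a) ^ (-1 / (L : ℝ)) / 2, max ((2 * a) ^ (-1 / (L : ℝ)) / 2) C, L !, by positivity,
    le_max_left _ _, fun N hN => ⟨?_, ?_⟩⟩
  · have hδ : (2 * a * (1 / L) ^ (L : ℝ))⁻¹ = L ! / 4 := by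
      rw [rpow_natCast, ha, div_pow, one_pow]
      field_simp
      ring
    refine mul_rpow_le_integral_pow (by positivity) hL₀ (by positivity) hF₀
      (integrableOn_erlangSurvival_mul_pow L hL₀ ((Nat.factorial_pos L).trans_le hN))
      (fun x hx => one_sub_mul_rpow_le_erlangSurvival_mul hL hx) ?_
    rw [hδ]
    have : (L ! : ℝ) ≤ N := by exact_mod_cast hN
    linarith
  · refine (integral_pow_le_mul_rpow (by positivity) (by exact_mod_cast hL)
      ((Nat.factorial_pos L).trans_le hN) hF₀
      (by simpa using integrableOn_erlangSurvival_mul_pow L hL₀ one_pos)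
      (fun x hx => erlangSurvival_mul_le_exp_neg_mul_rpow hx)
      (fun x hx => erlangSurvival_le_half hL (by nlinarith [mem_Ioi.1 hx]))).trans ?_
    gcongr
    exact le_max_right _ _
end

section
/- Fix an integer L ≥ 1 and a real P > 0, and let F(x) = 1 − e^{−Lx} Σ_{k=0}^{L−1} (Lx)^k / k! with density f(x) = L e^{−Lx} (Lx)^{L−1}/(L−1)! for x ≥ 0. Then the total throughput of the worst-user scheduler with L transmit antennas, R_tot(N) = N ∫_0^∞ log(1+Px) · N (1−F(x))^{N−1} f(x) dx, satisfies R_tot(N) = Θ(N^{(L−1)/L}): there exist constants 0 < c₁ ≤ c₂ and N₀ such that c₁ N^{(L−1)/L} ≤ R_tot(N) ≤ c₂ N^{(L−1)/L} for all N ≥ N₀. -/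
/-!
Integrating by parts against the tail `G = 1 - F` turns the expected worst-user rate into
`∫₀^∞ P / (1 + P x) · G(x)^N dx`. Near the origin `1 - G(x)` is of order `x^L`: it is at most
`2 (L x)^L`, so `G^N ≥ 1/2` on an interval of length of order `N^{-1/L}`; and on `[0, 1]` it is at
least `c x^L`, so `G^N ≤ exp (-c N x^L)`, whose integral over `(0, ∞)` is
`Γ(1/L + 1) (c N)^{-1/L}`. Beyond `1`, `G^N ≤ G(1)^{N-1} G` is geometrically small in `N`. So the
integral is `Θ(N^{-1/L})` and the throughput, `N` times it, is `Θ(N^{(L-1)/L})`.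
-/

open Real Set Finset MeasureTheory Filter Topology
open scoped Nat

/-- `erlangTail a n` and `erlangDensity a n` are the survival function `1 - F` and the density of
the Erlang law with shape `n` and rate `a`; `a = n = L` gives the normalized chi-square law with
`2L` degrees of freedom. -/
noncomputable def erlangTail (a : ℝ) (n : ℕ) (x : ℝ) : ℝ :=
  exp (-a * x) * ∑ k ∈ range n, (a * x) ^ k / k !

noncomputable def erlangDensity (a : ℝ) (n : ℕ) (x : ℝ) : ℝ :=
  a * exp (-a * x) * (a * x) ^ (n - 1) / (n - 1)!

noncomputable def erlangMinDensity (a : ℝ) (n N : ℕ) (x : ℝ) : ℝ :=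
  N * erlangTail a n x ^ (N - 1) * erlangDensity a n x

theorem log_one_add_le_self {y : ℝ} (hy : -1 < y) : log (1 + y) ≤ y := by
  linarith [log_le_sub_one_of_pos (show 0 < 1 + y by linarith)]

theorem pow_div_factorial_le_two_pow_mul_exp_half {t : ℝ} (ht : 0 ≤ t) (k : ℕ) :
    t ^ k / k ! ≤ 2 ^ k * exp (t / 2) :=
  calc t ^ k / k ! = 2 ^ k * ((t / 2) ^ k / k !) := by rw [div_pow]; field_simp
    _ ≤ 2 ^ k * exp (t / 2) := by gcongr; exact Real.pow_div_factorial_le_exp _ (by positivity) k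

theorem mul_rpow_neg_one_div {x s : ℝ} (hx : 0 < x) (hs : s ≠ 0) :
    x * x ^ (-1 / s) = x ^ ((s - 1) / s) := by
  rw [show (s - 1) / s = 1 + -1 / s by field_simp; ring, rpow_add hx, rpow_one]

theorem natCast_mul_pow_sub_one_le_exp_div {c ρ : ℝ} (hc : 0 < c) (hρ₀ : 0 ≤ ρ)
    (hρ : ρ ≤ exp (-c)) (N : ℕ) : N * ρ ^ (N - 1) ≤ exp c / c := by
  rcases N with _ | m
  · simp only [CharP.cast_eq_zero, zero_mul]; positivity
  set y := c * (m + 1) with hy_def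
  have hy : y * exp (-y) ≤ 1 := by
    calc y * exp (-y) ≤ exp y * exp (-y) := by gcongr; linarith [add_one_le_exp y]
      _ = 1 := by rw [← exp_add]; simp
  have hexp : exp (m * -c) = exp c * exp (-y) := by rw [← exp_add, hy_def]; ring_nf
  calc ((m + 1 : ℕ) : ℝ) * ρ ^ (m + 1 - 1) ≤ (m + 1) * exp (-c) ^ m := by push_cast; gcongr
    _ = exp c / c * (y * exp (-y)) := by rw [← exp_nat_mul, hexp]; field_simp; ring
    _ ≤ exp c / c := mul_le_of_le_one_right (by positivity) hy

section Erlang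

variable {a x : ℝ} {n N : ℕ}

@[fun_prop]
theorem continuous_erlangTail (a : ℝ) (n : ℕ) : Continuous (erlangTail a n) := by
  unfold erlangTail; fun_prop

@[fun_prop]
theorem continuous_erlangDensity (a : ℝ) (n : ℕ) : Continuous (erlangDensity a n) := by
  unfold erlangDensity; fun_prop

theorem erlangTail_nonneg (ha : 0 ≤ a) (hx : 0 ≤ x) : 0 ≤ erlangTail a n x := by
  unfold erlangTail; positivity

theorem erlangDensity_nonneg (ha : 0 ≤ a) (hx : 0 ≤ x) : 0 ≤ erlangDensity a n x := by
  unfold erlangDensity; positivity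

theorem erlangTail_le_one (ha : 0 ≤ a) (hx : 0 ≤ x) : erlangTail a n x ≤ 1 :=
  calc erlangTail a n x ≤ exp (-a * x) * exp (a * x) := by
        unfold erlangTail; gcongr; exact sum_le_exp_of_nonneg (by positivity) n
    _ = 1 := by rw [← exp_add]; simp

theorem exp_neg_mul_mul_pow_div_factorial_le_one_sub_erlangTail (ha : 0 ≤ a) (hx : 0 ≤ x) :
    exp (-a * x) * ((a * x) ^ n / n !) ≤ 1 - erlangTail a n x := by
  have h := erlangTail_le_one (n := n + 1) ha hx
  rw [erlangTail, sum_range_succ, mul_add] at h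
  rw [erlangTail]
  linarith

theorem one_sub_erlangTail_le (hn : n ≠ 0) (hax : 0 ≤ a * x) (hax₁ : a * x ≤ 1) :
    1 - erlangTail a n x ≤ 2 * (a * x) ^ n := by
  set t := a * x
  have hS : ∑ k ∈ range n, t ^ k / k ! ≤ exp t := sum_le_exp_of_nonneg hax n
  have hexp := exp_bound' hax hax₁ (Nat.pos_of_ne_zero hn)
  have hcoef : ((n : ℝ) + 1) / (n ! * n) ≤ 2 := by
    have h1 : (1 : ℝ) ≤ n ! := by exact_mod_cast n.factorial_pos
    have h2 : (1 : ℝ) ≤ n := by exact_mod_cast Nat.one_le_iff_ne_zero.mpr hn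
    rw [div_le_iff₀ (by positivity)]
    nlinarith
  calc 1 - erlangTail a n x = exp (-t) * (exp t - ∑ k ∈ range n, t ^ k / k !) := by
        rw [erlangTail, mul_sub, ← exp_add, neg_mul]; simp [t]
    _ ≤ 1 * (exp t - ∑ k ∈ range n, t ^ k / k !) :=
        mul_le_mul_of_nonneg_right (exp_le_one_iff.mpr (by linarith)) (by linarith)
    _ ≤ t ^ n * (((n : ℝ) + 1) / (n ! * n)) := by rw [mul_div_assoc] at hexp; linarith
    _ ≤ 2 * t ^ n := by rw [mul_comm]; gcongr

theorem hasDerivAt_erlangTail (a : ℝ) (hn : n ≠ 0) (x : ℝ) :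
    HasDerivAt (erlangTail a n) (-erlangDensity a n x) x := by
  obtain ⟨m, rfl⟩ := Nat.exists_eq_succ_of_ne_zero hn
  clear hn
  induction m with
  | zero =>
    have h1 : erlangTail a 1 = fun y => exp (-a * y) := by funext y; simp [erlangTail]
    rw [h1]
    simpa [erlangDensity, mul_comm] using ((hasDerivAt_id x).const_mul (-a)).exp
  | succ m ih =>
    have hterm : HasDerivAt (fun y => exp (-a * y) * ((a * y) ^ (m + 1) / (m + 1)!))
        (-erlangDensity a (m + 2) x + erlangDensity a (m + 1) x) x := by
      refine (((hasDerivAt_id' x).const_mul (-a)).exp.fun_mul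
        ((((hasDerivAt_id' x).const_mul a).fun_pow (m + 1)).div_const _)).congr_deriv ?_
      simp only [erlangDensity, Nat.add_sub_cancel]
      push_cast [Nat.factorial_succ]
      field_simp
    have hsplit : erlangTail a (m + 2) =
        fun y => erlangTail a (m + 1) y + exp (-a * y) * ((a * y) ^ (m + 1) / (m + 1)!) := by
      funext y
      simp only [erlangTail, sum_range_succ, mul_add]
    rw [hsplit]
    exact (ih.fun_add hterm).congr_deriv (by ring)

theorem erlangTail_antitoneOn (ha : 0 ≤ a) (hn : n ≠ 0) :
    AntitoneOn (erlangTail a n) (Ici 0) := by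
  refine antitoneOn_of_hasDerivWithinAt_nonpos (convex_Ici 0)
    (continuous_erlangTail a n).continuousOn
    (fun x _ => (hasDerivAt_erlangTail a hn x).hasDerivWithinAt) fun x hx => ?_
  rw [interior_Ici] at hx
  exact neg_nonpos.mpr (erlangDensity_nonneg ha (le_of_lt hx))

theorem erlangTail_le_two_pow_mul_exp (ha : 0 ≤ a) (hx : 0 ≤ x) :
    erlangTail a n x ≤ 2 ^ n * exp (-(a / 2) * x) := by
  have hsum : ∑ k ∈ range n, (a * x) ^ k / k ! ≤ 2 ^ n * exp (a * x / 2) :=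
    calc ∑ k ∈ range n, (a * x) ^ k / k ! ≤ ∑ k ∈ range n, 2 ^ k * exp (a * x / 2) :=
          sum_le_sum fun k _ => pow_div_factorial_le_two_pow_mul_exp_half (by positivity) k
      _ = (2 ^ n - 1) * exp (a * x / 2) := by rw [← sum_mul, geom_sum_eq (by norm_num)]; ring
      _ ≤ 2 ^ n * exp (a * x / 2) := by gcongr; linarith
  calc erlangTail a n x ≤ exp (-a * x) * (2 ^ n * exp (a * x / 2)) := by
        unfold erlangTail; gcongr
    _ = 2 ^ n * exp (-(a / 2) * x) := by rw [mul_left_comm, ← exp_add]; ring_nf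

theorem erlangDensity_le_mul_two_pow_mul_exp (ha : 0 ≤ a) (hx : 0 ≤ x) :
    erlangDensity a n x ≤ a * 2 ^ (n - 1) * exp (-(a / 2) * x) :=
  calc erlangDensity a n x = a * exp (-a * x) * ((a * x) ^ (n - 1) / (n - 1)!) := by
        rw [erlangDensity, mul_div_assoc]
    _ ≤ a * exp (-a * x) * (2 ^ (n - 1) * exp (a * x / 2)) := by
        gcongr; exact pow_div_factorial_le_two_pow_mul_exp_half (by positivity) _
    _ = a * 2 ^ (n - 1) * exp (-(a / 2) * x) := by
        rw [show -(a / 2) * x = -a * x + a * x / 2 by ring, exp_add]; ring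

theorem erlangTail_le_exp_neg_mul_pow (ha : 0 ≤ a) (hx : 0 ≤ x) (hx₁ : x ≤ 1) :
    erlangTail a n x ≤ exp (-(exp (-a) * a ^ n / n ! * x ^ n)) := by
  have hlow : exp (-a) * a ^ n / n ! * x ^ n ≤ exp (-a * x) * ((a * x) ^ n / n !) := by
    rw [mul_pow, div_mul_eq_mul_div, mul_div_assoc, mul_assoc, mul_div_assoc]
    gcongr
    nlinarith
  linarith [exp_neg_mul_mul_pow_div_factorial_le_one_sub_erlangTail (n := n) ha hx,
    add_one_le_exp (-(exp (-a) * a ^ n / n ! * x ^ n))]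

theorem erlangMinDensity_nonneg (ha : 0 ≤ a) (hx : 0 ≤ x) : 0 ≤ erlangMinDensity a n N x := by
  have := erlangTail_nonneg (n := n) ha hx
  have := erlangDensity_nonneg (n := n) ha hx
  unfold erlangMinDensity
  positivity

end Erlang

section Throughput

variable {a P : ℝ} {n N : ℕ}

theorem integrableOn_erlangTail_pow (ha : 0 < a) (hN : N ≠ 0) :
    IntegrableOn (fun x => erlangTail a n x ^ N) (Ioi 0) := by
  refine ((exp_neg_integrableOn_Ioi 0 (half_pos ha)).const_mul (2 ^ n)).mono'
    (by fun_prop : Continuous _).aestronglyMeasurable ?_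
  filter_upwards [ae_restrict_mem measurableSet_Ioi] with x hx
  have hx : (0 : ℝ) ≤ x := le_of_lt hx
  rw [norm_of_nonneg (pow_nonneg (erlangTail_nonneg ha.le hx) N)]
  exact (pow_le_of_le_one (erlangTail_nonneg ha.le hx) (erlangTail_le_one ha.le hx) hN).trans
    (erlangTail_le_two_pow_mul_exp ha.le hx)

theorem integrableOn_div_mul_erlangTail_pow (ha : 0 < a) (hP : 0 < P) (hN : N ≠ 0) :
    IntegrableOn (fun x => P / (1 + P * x) * erlangTail a n x ^ N) (Ioi 0) := by
  refine ((integrableOn_erlangTail_pow (n := n) ha hN).const_mul P).mono' ?_ ?_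
  · exact (ContinuousOn.mul (continuousOn_const.div (by fun_prop) fun x hx =>
      (show 0 < 1 + P * x by nlinarith [mem_Ioi.mp hx]).ne') (by fun_prop)).aestronglyMeasurable
      measurableSet_Ioi
  filter_upwards [ae_restrict_mem measurableSet_Ioi] with x hx
  have hx : (0 : ℝ) ≤ x := le_of_lt hx
  have hG := pow_nonneg (erlangTail_nonneg (n := n) ha.le hx) N
  rw [norm_of_nonneg (by positivity)]
  exact mul_le_mul_of_nonneg_right (div_le_self hP.le (by nlinarith)) hG

theorem integrableOn_log_mul_erlangMinDensity (ha : 0 < a) (hP : 0 < P) :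
    IntegrableOn (fun x => log (1 + P * x) * erlangMinDensity a n N x) (Ioi 0) := by
  have hexp : IntegrableOn (fun x : ℝ => x * exp (-(a / 2) * x)) (Ioi 0) := by
    simpa using integrableOn_rpow_mul_exp_neg_mul_rpow (s := 1) (p := 1) (by norm_num) one_pos
      (half_pos ha)
  refine (hexp.const_mul (P * N * (a * 2 ^ (n - 1)))).mono' ?_ ?_
  · exact (ContinuousOn.mul (ContinuousOn.log (by fun_prop) fun x hx =>
      (show 0 < 1 + P * x by nlinarith [mem_Ioi.mp hx]).ne')
      (by unfold erlangMinDensity; fun_prop)).aestronglyMeasurable measurableSet_Ioi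
  filter_upwards [ae_restrict_mem measurableSet_Ioi] with x hx
  have hx : (0 : ℝ) ≤ x := le_of_lt hx
  have hG₀ := erlangTail_nonneg (n := n) ha.le hx
  have hlog : log (1 + P * x) ≤ P * x := log_one_add_le_self (by nlinarith)
  have hlog₀ : 0 ≤ log (1 + P * x) := log_nonneg (by nlinarith)
  have hmin : erlangMinDensity a n N x ≤ N * (a * 2 ^ (n - 1) * exp (-(a / 2) * x)) := by
    rw [erlangMinDensity, mul_assoc]
    refine mul_le_mul_of_nonneg_left ?_ N.cast_nonneg
    calc erlangTail a n x ^ (N - 1) * erlangDensity a n x ≤ 1 * erlangDensity a n x := by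
          gcongr
          · exact erlangDensity_nonneg ha.le hx
          · exact pow_le_one₀ hG₀ (erlangTail_le_one ha.le hx)
      _ ≤ _ := by rw [one_mul]; exact erlangDensity_le_mul_two_pow_mul_exp ha.le hx
  rw [norm_of_nonneg (mul_nonneg hlog₀ (erlangMinDensity_nonneg ha.le hx))]
  calc log (1 + P * x) * erlangMinDensity a n N x
      ≤ (P * x) * (N * (a * 2 ^ (n - 1) * exp (-(a / 2) * x))) := by
        gcongr
        exact erlangMinDensity_nonneg ha.le hx
    _ = P * N * (a * 2 ^ (n - 1)) * (x * exp (-(a / 2) * x)) := by ring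

theorem tendsto_log_one_add_mul_mul_erlangTail_pow_atTop (ha : 0 < a) (hP : 0 < P)
    (hN : N ≠ 0) :
    Tendsto (fun x => log (1 + P * x) * erlangTail a n x ^ N) atTop (𝓝 0) := by
  have hlim : Tendsto (fun x : ℝ => P * 2 ^ n * (x * exp (-(a / 2) * x))) atTop (𝓝 0) := by
    simpa using (tendsto_rpow_mul_exp_neg_mul_atTop_nhds_zero 1 (a / 2) (half_pos ha)).const_mul
      (P * 2 ^ n)
  refine squeeze_zero' ?_ ?_ hlim
  · filter_upwards [eventually_ge_atTop 0] with x hx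
    have := erlangTail_nonneg (n := n) ha.le hx
    have : 0 ≤ log (1 + P * x) := log_nonneg (by nlinarith)
    positivity
  · filter_upwards [eventually_ge_atTop 0] with x hx
    have hG₀ := erlangTail_nonneg (n := n) ha.le hx
    calc log (1 + P * x) * erlangTail a n x ^ N ≤ (P * x) * (2 ^ n * exp (-(a / 2) * x)) :=
          mul_le_mul (log_one_add_le_self (by nlinarith))
            ((pow_le_of_le_one hG₀ (erlangTail_le_one ha.le hx) hN).trans
              (erlangTail_le_two_pow_mul_exp ha.le hx))
            (pow_nonneg hG₀ N) (by positivity)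
      _ = P * 2 ^ n * (x * exp (-(a / 2) * x)) := by ring

theorem integral_log_mul_erlangMinDensity (ha : 0 < a) (hn : n ≠ 0) (hP : 0 < P) (hN : N ≠ 0) :
    ∫ x in Ioi 0, log (1 + P * x) * erlangMinDensity a n N x =
      ∫ x in Ioi 0, P / (1 + P * x) * erlangTail a n x ^ N := by
  have hderiv : ∀ x : ℝ, 0 ≤ x →
      HasDerivAt (fun y => log (1 + P * y) * erlangTail a n y ^ N)
      (P / (1 + P * x) * erlangTail a n x ^ N - log (1 + P * x) * erlangMinDensity a n N x) x := by
    intro x hx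
    have hlog := (((hasDerivAt_id' x).const_mul P).const_add 1).log
      (show 1 + P * x ≠ 0 by nlinarith)
    refine (hlog.fun_mul ((hasDerivAt_erlangTail a hn x).fun_pow N)).congr_deriv ?_
    rw [erlangMinDensity]
    ring
  have hFTC := integral_Ioi_of_hasDerivAt_of_tendsto
    (hderiv 0 le_rfl).continuousAt.continuousWithinAt (fun x hx => hderiv x (le_of_lt hx))
    ((integrableOn_div_mul_erlangTail_pow ha hP hN).sub
      (integrableOn_log_mul_erlangMinDensity ha hP))
    (tendsto_log_one_add_mul_mul_erlangTail_pow_atTop ha hP hN)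
  rw [integral_sub (integrableOn_div_mul_erlangTail_pow ha hP hN)
    (integrableOn_log_mul_erlangMinDensity ha hP)] at hFTC
  simp only [mul_zero, add_zero, log_one, zero_mul, sub_zero] at hFTC
  linarith

theorem one_half_le_erlangTail_pow {x : ℝ} (ha : 0 ≤ a) (hn : n ≠ 0) (hx : 0 ≤ x)
    (hax : a * x ≤ 1) (hsmall : 4 * N * (a * x) ^ n ≤ 1) : 1 / 2 ≤ erlangTail a n x ^ N := by
  have hgap := mul_le_mul_of_nonneg_left (one_sub_erlangTail_le hn (mul_nonneg ha hx) hax)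
    N.cast_nonneg
  calc 1 / 2 ≤ 1 + N * (erlangTail a n x - 1) := by linarith
    _ ≤ (1 + (erlangTail a n x - 1)) ^ N :=
        one_add_mul_le_pow (by linarith [erlangTail_nonneg (n := n) ha hx]) N
    _ = erlangTail a n x ^ N := by ring

theorem le_integral_div_mul_erlangTail_pow (ha : 0 < a) (hn : n ≠ 0) (hP : 0 < P) (hN : N ≠ 0) :
    P / (2 * (4 * a + P)) * (N : ℝ) ^ (-1 / n : ℝ) ≤
      ∫ x in Ioi 0, P / (1 + P * x) * erlangTail a n x ^ N := by
  have hN₀ : (0 : ℝ) < N := by positivity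
  have hn₀ : (n : ℝ) ≠ 0 := by positivity
  set s := (N : ℝ) ^ (-1 / n : ℝ)
  have hs₀ : 0 < s := rpow_pos_of_pos hN₀ _
  have hs₁ : s ≤ 1 :=
    rpow_le_one_of_one_le_of_nonpos (by exact_mod_cast Nat.one_le_iff_ne_zero.mpr hN)
      (div_nonpos_of_nonpos_of_nonneg (by norm_num) n.cast_nonneg)
  have hsn : N * s ^ n = 1 := by
    rw [← rpow_natCast, ← rpow_mul hN₀.le, div_mul_cancel₀ _ hn₀, rpow_neg_one,
      mul_inv_cancel₀ hN₀.ne']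
  set δ := s / (4 * a)
  have hδ : 0 < δ := by positivity
  have hpoint : ∀ x ∈ Ioc 0 δ,
      2 * a * P / (4 * a + P) ≤ P / (1 + P * x) * erlangTail a n x ^ N := by
    rintro x ⟨hx₀, hxδ⟩
    have hax : a * x ≤ s / 4 := by
      calc a * x ≤ a * δ := by gcongr
        _ = s / 4 := by simp only [δ]; field_simp
    have hhalf : 1 / 2 ≤ erlangTail a n x ^ N := by
      refine one_half_le_erlangTail_pow ha.le hn hx₀.le (by linarith) ?_
      calc 4 * N * (a * x) ^ n ≤ 4 * N * (s / 4) ^ n := by gcongr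
        _ = 4 / 4 ^ n * (N * s ^ n) := by rw [div_pow]; ring
        _ ≤ 1 := by
          rw [hsn, mul_one, div_le_one (by positivity)]
          exact le_self_pow₀ (by norm_num) hn
    have hrate : 4 * a * P / (4 * a + P) ≤ P / (1 + P * x) := by
      rw [div_le_div_iff₀ (by positivity) (by positivity)]
      nlinarith [mul_le_mul_of_nonneg_left (show 4 * (a * x) ≤ 1 by linarith) (sq_nonneg P)]
    calc 2 * a * P / (4 * a + P) = 4 * a * P / (4 * a + P) * (1 / 2) := by ring
      _ ≤ P / (1 + P * x) * erlangTail a n x ^ N :=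
        mul_le_mul hrate hhalf (by norm_num) (by positivity)
  have hint := integrableOn_div_mul_erlangTail_pow (n := n) ha hP hN
  calc P / (2 * (4 * a + P)) * s = ∫ _ in Ioc 0 δ, 2 * a * P / (4 * a + P) := by
        rw [setIntegral_const, Real.volume_real_Ioc_of_le hδ.le, smul_eq_mul]
        simp only [δ, sub_zero]
        field_simp
        norm_num
    _ ≤ ∫ x in Ioc 0 δ, P / (1 + P * x) * erlangTail a n x ^ N :=
        setIntegral_mono_on (integrableOn_const measure_Ioc_lt_top.ne)
          (hint.mono_set Ioc_subset_Ioi_self) measurableSet_Ioc hpoint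
    _ ≤ ∫ x in Ioi 0, P / (1 + P * x) * erlangTail a n x ^ N := by
        refine setIntegral_mono_set hint ?_ Ioc_subset_Ioi_self.eventuallyLE
        filter_upwards [ae_restrict_mem measurableSet_Ioi] with x hx
        have := erlangTail_nonneg (n := n) ha.le (le_of_lt hx)
        have : 0 ≤ 1 + P * x := by nlinarith [mem_Ioi.mp hx]
        positivity

theorem integral_div_mul_erlangTail_pow_le (ha : 0 < a) (hP : 0 < P) (hN : N ≠ 0) :
    ∫ x in Ioi 0, P / (1 + P * x) * erlangTail a n x ^ N ≤
      P * ∫ x in Ioi 0, erlangTail a n x ^ N := by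
  rw [← integral_const_mul]
  exact setIntegral_mono_on (integrableOn_div_mul_erlangTail_pow ha hP hN)
    ((integrableOn_erlangTail_pow ha hN).const_mul P) measurableSet_Ioi fun x hx =>
      mul_le_mul_of_nonneg_right (div_le_self hP.le (by nlinarith [mem_Ioi.mp hx]))
        (pow_nonneg (erlangTail_nonneg ha.le (le_of_lt hx)) N)

theorem setIntegral_Ioc_erlangTail_pow_le (ha : 0 < a) (hn : n ≠ 0) (hN : N ≠ 0) :
    ∫ x in Ioc 0 1, erlangTail a n x ^ N ≤
      (N * (exp (-a) * a ^ n / n !)) ^ (-1 / n : ℝ) * Gamma (1 / n + 1) := by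
  set c := exp (-a) * a ^ n / (n ! : ℝ)
  have hn₀ : (0 : ℝ) < n := by positivity
  have hb : 0 < N * c := by positivity
  have hexp : IntegrableOn (fun x : ℝ => exp (-(N * c) * x ^ (n : ℝ))) (Ioi 0) := by
    simpa using integrableOn_rpow_mul_exp_neg_mul_rpow (s := 0) (by norm_num) hn₀ hb
  have hpoint :
      ∀ x ∈ Ioc (0 : ℝ) 1, erlangTail a n x ^ N ≤ exp (-(N * c) * x ^ (n : ℝ)) := by
    rintro x ⟨hx₀, hx₁⟩
    calc erlangTail a n x ^ N ≤ exp (-(c * x ^ n)) ^ N :=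
          pow_le_pow_left₀ (erlangTail_nonneg ha.le hx₀.le)
            (erlangTail_le_exp_neg_mul_pow ha.le hx₀.le hx₁) N
      _ = exp (-(N * c) * x ^ (n : ℝ)) := by rw [← exp_nat_mul, rpow_natCast]; ring_nf
  calc ∫ x in Ioc 0 1, erlangTail a n x ^ N
      ≤ ∫ x in Ioc 0 1, exp (-(N * c) * x ^ (n : ℝ)) :=
        setIntegral_mono_on ((integrableOn_erlangTail_pow ha hN).mono_set Ioc_subset_Ioi_self)
          (hexp.mono_set Ioc_subset_Ioi_self) measurableSet_Ioc hpoint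
    _ ≤ ∫ x in Ioi 0, exp (-(N * c) * x ^ (n : ℝ)) :=
        setIntegral_mono_set hexp (Eventually.of_forall fun _ => (exp_pos _).le)
          Ioc_subset_Ioi_self.eventuallyLE
    _ = (N * c) ^ (-1 / n : ℝ) * Gamma (1 / n + 1) := integral_exp_neg_mul_rpow hn₀ hb

theorem setIntegral_Ioi_one_erlangTail_pow_le (ha : 0 < a) (hn : n ≠ 0) (hN : N ≠ 0) :
    ∫ x in Ioi 1, erlangTail a n x ^ N ≤
      erlangTail a n 1 ^ (N - 1) * ∫ x in Ioi 1, erlangTail a n x := by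
  have hsub : Ioi (1 : ℝ) ⊆ Ioi 0 := Ioi_subset_Ioi zero_le_one
  have hint : IntegrableOn (erlangTail a n) (Ioi 1) := by
    simpa using (integrableOn_erlangTail_pow (n := n) ha one_ne_zero).mono_set hsub
  rw [← integral_const_mul]
  refine setIntegral_mono_on ((integrableOn_erlangTail_pow ha hN).mono_set hsub)
    (hint.const_mul _) measurableSet_Ioi fun x hx => ?_
  have hx₀ : (0 : ℝ) ≤ x := zero_le_one.trans (le_of_lt hx)
  rw [← pow_sub_one_mul hN]
  gcongr
  · exact erlangTail_nonneg ha.le hx₀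
  · exact erlangTail_nonneg ha.le hx₀
  · exact erlangTail_antitoneOn ha.le hn (mem_Ici.mpr zero_le_one) (mem_Ici.mpr hx₀)
      (le_of_lt hx)

theorem integral_erlangTail_pow_le (ha : 0 < a) (hn : n ≠ 0) (hN : N ≠ 0) :
    ∫ x in Ioi 0, erlangTail a n x ^ N ≤
      (N * (exp (-a) * a ^ n / n !)) ^ (-1 / n : ℝ) * Gamma (1 / n + 1) +
        erlangTail a n 1 ^ (N - 1) * ∫ x in Ioi 1, erlangTail a n x := by
  have hint := integrableOn_erlangTail_pow (n := n) ha hN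
  rw [← Ioc_union_Ioi_eq_Ioi zero_le_one, setIntegral_union (Ioc_disjoint_Ioi le_rfl)
    measurableSet_Ioi (hint.mono_set Ioc_subset_Ioi_self)
    (hint.mono_set (Ioi_subset_Ioi zero_le_one))]
  exact add_le_add (setIntegral_Ioc_erlangTail_pow_le ha hn hN)
    (setIntegral_Ioi_one_erlangTail_pow_le ha hn hN)

theorem exists_natCast_mul_integral_erlangTail_pow_le (ha : 0 < a) (hn : n ≠ 0) :
    ∃ C, ∀ N : ℕ, N ≠ 0 →
      N * ∫ x in Ioi 0, erlangTail a n x ^ N ≤ C * (N : ℝ) ^ (((n : ℝ) - 1) / n) := by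
  set c := exp (-a) * a ^ n / (n ! : ℝ)
  have hc : 0 < c := by positivity
  set T := ∫ x in Ioi 1, erlangTail a n x
  have hT : 0 ≤ T := setIntegral_nonneg measurableSet_Ioi fun x hx =>
    erlangTail_nonneg ha.le (zero_le_one.trans (le_of_lt hx))
  have hρ : erlangTail a n 1 ≤ exp (-c) := by
    simpa using erlangTail_le_exp_neg_mul_pow (n := n) ha.le zero_le_one le_rfl
  have hΓ : 0 < Gamma (1 / n + 1) := Gamma_pos_of_pos (by positivity)
  refine ⟨c ^ (-1 / n : ℝ) * Gamma (1 / n + 1) + exp c / c * T, fun N hN => ?_⟩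
  have hN₀ : (0 : ℝ) < N := by positivity
  have hpow : 1 ≤ (N : ℝ) ^ (((n : ℝ) - 1) / n) :=
    one_le_rpow (by exact_mod_cast Nat.one_le_iff_ne_zero.mpr hN) (div_nonneg
      (sub_nonneg.mpr (by exact_mod_cast Nat.one_le_iff_ne_zero.mpr hn)) n.cast_nonneg)
  have hgeom := natCast_mul_pow_sub_one_le_exp_div hc (erlangTail_nonneg ha.le zero_le_one) hρ N
  calc N * ∫ x in Ioi 0, erlangTail a n x ^ N
      ≤ N * ((N * c) ^ (-1 / n : ℝ) * Gamma (1 / n + 1) + erlangTail a n 1 ^ (N - 1) * T) := by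
        gcongr
        exact integral_erlangTail_pow_le ha hn hN
    _ = c ^ (-1 / n : ℝ) * Gamma (1 / n + 1) * (N * N ^ (-1 / n : ℝ)) +
          N * erlangTail a n 1 ^ (N - 1) * T := by
        rw [mul_rpow hN₀.le hc.le]; ring
    _ ≤ c ^ (-1 / n : ℝ) * Gamma (1 / n + 1) * N ^ (((n : ℝ) - 1) / n) +
          exp c / c * T * N ^ (((n : ℝ) - 1) / n) := by
        rw [mul_rpow_neg_one_div hN₀ (by positivity)]
        refine add_le_add le_rfl ?_
        calc N * erlangTail a n 1 ^ (N - 1) * T ≤ exp c / c * T := by gcongr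
          _ ≤ exp c / c * T * N ^ (((n : ℝ) - 1) / n) :=
            le_mul_of_one_le_right (by positivity) hpow
    _ = (c ^ (-1 / n : ℝ) * Gamma (1 / n + 1) + exp c / c * T) * N ^ (((n : ℝ) - 1) / n) := by
        ring

theorem exists_throughput_bounds (ha : 0 < a) (hn : n ≠ 0) (hP : 0 < P) :
    ∃ C, ∀ N : ℕ, N ≠ 0 →
      P / (2 * (4 * a + P)) * (N : ℝ) ^ (((n : ℝ) - 1) / n) ≤
          N * ∫ x in Ioi 0, log (1 + P * x) * erlangMinDensity a n N x ∧
        N * ∫ x in Ioi 0, log (1 + P * x) * erlangMinDensity a n N x ≤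
          C * (N : ℝ) ^ (((n : ℝ) - 1) / n) := by
  obtain ⟨C, hC⟩ := exists_natCast_mul_integral_erlangTail_pow_le ha hn
  refine ⟨P * C, fun N hN => ?_⟩
  have hN₀ : (0 : ℝ) < N := by positivity
  rw [integral_log_mul_erlangMinDensity ha hn hP hN]
  constructor
  · rw [← mul_rpow_neg_one_div hN₀ (by positivity), mul_left_comm]
    gcongr
    exact le_integral_div_mul_erlangTail_pow ha hn hP hN
  · calc N * ∫ x in Ioi 0, P / (1 + P * x) * erlangTail a n x ^ N
        ≤ P * (N * ∫ x in Ioi 0, erlangTail a n x ^ N) := by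
          rw [mul_left_comm]
          gcongr
          exact integral_div_mul_erlangTail_pow_le ha hP hN
      _ ≤ P * C * (N : ℝ) ^ (((n : ℝ) - 1) / n) := by
          rw [mul_assoc]
          exact mul_le_mul_of_nonneg_left (hC N hN) hP.le

end Throughput

/-- Fix `L ≥ 1` and `P > 0`; let `F(x) = 1 − e^{−Lx} Σ_{k<L} (Lx)^k/k!` with density
`f(x) = L e^{−Lx}(Lx)^{L−1}/(L−1)!`. The total throughput of the worst-user scheduler
with `L` antennas, `N ∫_0^∞ log(1+Px) · N(1−F(x))^{N−1} f(x) dx`, is `Θ(N^{(L−1)/L})`. -/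
theorem worst_user_multiantenna_throughput_theta (L : ℕ) (hL : 1 ≤ L) (P : ℝ) (hP : 0 < P) :
    ∃ c₁ c₂ : ℝ, ∃ N₀ : ℕ, 0 < c₁ ∧ c₁ ≤ c₂ ∧
      ∀ N : ℕ, N₀ ≤ N →
        c₁ * (N : ℝ) ^ (((L : ℝ) - 1) / L) ≤
            ((N : ℝ) * ∫ x in Ioi (0 : ℝ), Real.log (1 + P * x) *
              ((N : ℝ) *
                (Real.exp (-(L : ℝ) * x) *
                  ∑ k ∈ Finset.range L, ((L : ℝ) * x) ^ k / (Nat.factorial k : ℝ)) ^ (N - 1) *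
                ((L : ℝ) * Real.exp (-(L : ℝ) * x) * ((L : ℝ) * x) ^ (L - 1) /
                  (Nat.factorial (L - 1) : ℝ)))) ∧
          ((N : ℝ) * ∫ x in Ioi (0 : ℝ), Real.log (1 + P * x) *
              ((N : ℝ) *
                (Real.exp (-(L : ℝ) * x) *
                  ∑ k ∈ Finset.range L, ((L : ℝ) * x) ^ k / (Nat.factorial k : ℝ)) ^ (N - 1) *
                ((L : ℝ) * Real.exp (-(L : ℝ) * x) * ((L : ℝ) * x) ^ (L - 1) /
                  (Nat.factorial (L - 1) : ℝ)))) ≤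
            c₂ * (N : ℝ) ^ (((L : ℝ) - 1) / L) := by
  obtain ⟨C, hC⟩ :=
    exists_throughput_bounds (a := L) (n := L) (by exact_mod_cast hL) (by omega) hP
  have hC₁ := hC 1 one_ne_zero
  simp only [Nat.cast_one, one_rpow, mul_one, one_mul] at hC₁
  exact ⟨_, C, 1, by positivity, hC₁.1.trans hC₁.2, fun N hN => hC N (by omega)⟩
end
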